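/- arXiv:1304.5285 — 2 statements merged into one kernel-verified Lean document; each statement's English description precedes it below -/
import Mathlib

section
/- Let d ≥ 1 and s ≥ 0 be integers and ω ∈ ℝ. For a Schwartz function σ(x,θ) on ℝ^{d+1}×ℝ define σ̃(x,θ₀,ξ_d) := σ(x, θ₀ + ω ξ_d). Then there exists a constant C = C(d,s), independent of σ and of ω, such that |σ̃|_{𝓔^s} ≤ C ‖σ‖_{H^{s+1}(ℝ^{d+2})}. -/
open MeasureTheory ENNReal

noncomputable section

variable {F : Type*} [NormedAddCommGroup F] [NormedSpace ℝ F]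

/-- Partial derivative in the `i`-th coordinate direction on `ℝⁿ`. -/
def pd {n : ℕ} (i : Fin n) (f : (Fin n → ℝ) → F) : (Fin n → ℝ) → F :=
  fun z => fderiv ℝ f z (Pi.single i 1)

/-- Iterated mixed partial derivative associated to a multi-index `α`. -/
def mderiv {n : ℕ} (α : Fin n → ℕ) (f : (Fin n → ℝ) → F) : (Fin n → ℝ) → F :=
  (List.finRange n).foldr (fun i g => (pd i)^[α i] g) f

/-- Multi-indices of total order at most `s`. -/
def mIdx (n s : ℕ) : Finset (Fin n → Fin (s + 1)) :=
  Finset.univ.filter (fun α => (∑ i, ((α i : ℕ))) ≤ s)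

/-- The `L²` norm (as an extended nonnegative real). -/
def L2N {n : ℕ} (f : (Fin n → ℝ) → F) : ℝ≥0∞ :=
  eLpNorm f 2 volume

/-- The Sobolev `H^s` norm: sum of `L²` norms of all partials of order `≤ s`. -/
def HsN {n : ℕ} (s : ℕ) (f : (Fin n → ℝ) → F) : ℝ≥0∞ :=
  ∑ α ∈ mIdx n s, L2N (mderiv (fun i => (α i : ℕ)) f)

/-- The weighted norm `Γ^s` on `ℝ^{d+1} × ℝ` (the variable `θ` is the last coordinate). -/
def GammaN (d s : ℕ) (a : (Fin (d + 2) → ℝ) → F) : ℝ≥0∞ :=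
  ∑ β₁ ∈ Finset.range (s + 1), ∑ β₂ ∈ mIdx (d + 1) s, ∑ β₃ ∈ Finset.range (s + 1),
    if β₁ + (∑ i, ((β₂ i : ℕ))) + β₃ ≤ s then
      L2N (fun z => (z (Fin.last (d + 1))) ^ β₁ •
        mderiv (Fin.snoc (fun i => ((β₂ i : ℕ))) β₃) a z)
    else 0

/-- The norm `Λ^s` on `ℝ^{d+1} × ℝ`. -/
def LambdaN (d s : ℕ) (a : (Fin (d + 2) → ℝ) → F) : ℝ≥0∞ :=
  (∑ β₁ ∈ Finset.range (s + 1), L2N (fun z => (z (Fin.last (d + 1))) ^ β₁ • a z))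
    + (∑ β₂ ∈ mIdx (d + 1) s, L2N (mderiv (Fin.snoc (fun i => ((β₂ i : ℕ))) 0) a))
    + (∑ β₃ ∈ Finset.range (s + 1), L2N ((pd (Fin.last (d + 1)))^[β₃] a))

/-- The norm `E^s`: functions of `(x_d, (x', θ₀))`. -/
def EsN {d : ℕ} (s : ℕ) (U : ℝ → (Fin (d + 1) → ℝ) → F) : ℝ≥0∞ :=
  (⨆ xd ∈ Set.Ici (0 : ℝ), HsN s (U xd)) +
    (∫⁻ xd in Set.Ici (0 : ℝ), (HsN (s + 1) (U xd)) ^ 2) ^ (1 / 2 : ℝ)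

/-- The norm `𝓔^s`: functions of `(ξ_d, x_d, (x', θ₀))`. -/
def CalEsN {d : ℕ} (s : ℕ) (W : ℝ → ℝ → (Fin (d + 1) → ℝ) → F) : ℝ≥0∞ :=
  ⨆ ξd ∈ Set.Ici (0 : ℝ), EsN s (W ξd)

/-- The point `(x', x_d, θ) ∈ ℝ^{d+2}` built from `w = (x', θ₀) ∈ ℝ^{d+1}`, `x_d` and `θ`. -/
def pt {d : ℕ} (w : Fin (d + 1) → ℝ) (xd θ : ℝ) : Fin (d + 2) → ℝ :=
  Fin.snoc (Fin.snoc (fun i : Fin d => w (Fin.castSucc i)) xd) θ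

/-- Moment-zero approximation: cut off the low `θ`-frequencies of `σ`. -/
def mz (φ : ℝ → ℝ) (p : ℝ) {d : ℕ} (σ : (Fin (d + 2) → ℝ) → ℂ) :
    (Fin (d + 2) → ℝ) → ℂ :=
  fun z => FourierTransformInv.fourierInv
    (fun m : ℝ => (1 - (φ (m / p) : ℂ)) *
      FourierTransform.fourier (fun θ : ℝ => σ (Function.update z (Fin.last (d + 1)) θ)) m)
    (z (Fin.last (d + 1)))

/-- The `θ`-primitive of the moment-zero approximation. -/
def primI (φ : ℝ → ℝ) (p : ℝ) {d : ℕ} (σ : (Fin (d + 2) → ℝ) → ℂ) :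
    (Fin (d + 2) → ℝ) → ℂ :=
  fun z => ∫ r in Set.Iic (z (Fin.last (d + 1))),
    mz φ p σ (Function.update z (Fin.last (d + 1)) r)

/-!
Fix `ξ_d`. In the variables `w = (x', θ₀)` the profile is the slice `x_d = const` of `σ`,
translated by `ω ξ_d` in the `θ₀`-direction. Translations preserve every `H^s` norm, so `ω` and
`ξ_d` drop out. A `w`-derivative of the slice is the slice of the corresponding derivative of `σ`
(partial derivatives of a Schwartz function commute, so their order is irrelevant). The
supremum over `x_d` is then bounded by the one-dimensional trace inequality
`|h(x)|² ≤ ∫ |h|² + |h'|²` along the `x_d`-lines, which costs one `x_d`-derivative, and the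
`L²(dx_d)` part by Fubini and Minkowski's inequality over the multi-indices.
-/

open SchwartzMap LineDeriv

section LineDeriv

variable {E : Type*} [NormedAddCommGroup E] [NormedSpace ℝ E]

theorem SchwartzMap.lineDerivOp_comm (u v : E) (f : 𝓢(E, F)) :
    ∂_{u} (∂_{v} f) = ∂_{v} (∂_{u} f) := by
  have hsecond (a b : E) :
      ⇑(∂_{a} (∂_{b} f) : 𝓢(E, F)) = fun x => fderiv ℝ (fderiv ℝ f) x a b := by
    ext x
    have hb : ⇑(∂_{b} f : 𝓢(E, F)) = fun y => fderiv ℝ f y b :=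
      funext (lineDerivOp_apply_eq_fderiv b f)
    have hdiff : Differentiable ℝ (fderiv ℝ f) :=
      ((f.smooth 2).fderiv_right (m := 1) (by norm_num)).differentiable one_ne_zero
    rw [lineDerivOp_apply_eq_fderiv, hb, fderiv_clm_apply (hdiff x) (differentiableAt_const b)]
    simp
  ext x
  rw [hsecond, hsecond]
  exact (f.smooth 2).contDiffAt.isSymmSndFDerivAt
    (by simp [minSmoothness_of_isRCLikeNormedField]) u v

theorem SchwartzMap.foldr_lineDerivOp_perm {ι : Type*} (v : ι → E) {L₁ L₂ : List ι}
    (h : L₁.Perm L₂) (f : 𝓢(E, F)) :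
    L₁.foldr (fun i g => ∂_{v i} g) f = L₂.foldr (fun i g => ∂_{v i} g) f :=
  h.foldr_eq' (fun i _ j _ g => lineDerivOp_comm (v j) (v i) g) f

end LineDeriv

section MultiIndex

variable {n : ℕ}

def multiIndexList (α : Fin n → ℕ) : List (Fin n) :=
  (List.finRange n).flatMap fun i => List.replicate (α i) i

theorem count_multiIndexList (α : Fin n → ℕ) (i : Fin n) : (multiIndexList α).count i = α i := by
  rw [multiIndexList, List.count_flatMap, ← Fin.sum_univ_def]
  simp [List.count_replicate]

theorem iterate_pd_eq_foldr (i : Fin n) (k : ℕ) (f : (Fin n → ℝ) → F) :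
    (pd i)^[k] f = (List.replicate k i).foldr pd f := by
  induction k with
  | zero => rfl
  | succ k ih => rw [Function.iterate_succ_apply', ih, List.replicate_succ, List.foldr_cons]

theorem mderiv_eq_foldr_pd (α : Fin n → ℕ) (f : (Fin n → ℝ) → F) :
    mderiv α f = (multiIndexList α).foldr pd f := by
  rw [mderiv, multiIndexList]
  induction List.finRange n with
  | nil => rfl
  | cons i l ih =>
    rw [List.foldr_cons, ih, List.flatMap_cons, List.foldr_append, iterate_pd_eq_foldr]

theorem L2N_mderiv_le_HsN {s : ℕ} (f : (Fin n → ℝ) → F) (β : Fin n → ℕ) (hβ : ∑ i, β i ≤ s) :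
    L2N (mderiv β f) ≤ HsN s f := by
  have hβs (i : Fin n) : β i < s + 1 :=
    Nat.lt_succ_of_le ((Finset.single_le_sum (fun j _ => Nat.zero_le (β j))
      (Finset.mem_univ i)).trans hβ)
  have hmem : (fun i => (⟨β i, hβs i⟩ : Fin (s + 1))) ∈ mIdx n s :=
    Finset.mem_filter.2 ⟨Finset.mem_univ _, hβ⟩
  have hterm := Finset.single_le_sum
    (f := fun α : Fin n → Fin (s + 1) => L2N (mderiv (fun i => (α i : ℕ)) f)) (fun _ _ => zero_le)
    hmem
  exact hterm

end MultiIndex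

section Translation

variable {n : ℕ}

theorem pd_comp_add_right (i : Fin n) (f : (Fin n → ℝ) → F) (a : Fin n → ℝ) :
    pd i (fun w => f (w + a)) = fun w => pd i f (w + a) := by
  ext w
  simp only [pd, fderiv_comp_add_right]

theorem mderiv_comp_add_right (α : Fin n → ℕ) (f : (Fin n → ℝ) → F) (a : Fin n → ℝ) :
    mderiv α (fun w => f (w + a)) = fun w => mderiv α f (w + a) := by
  simp only [mderiv_eq_foldr_pd]
  induction multiIndexList α with
  | nil => rfl
  | cons i l ih => rw [List.foldr_cons, ih, pd_comp_add_right, List.foldr_cons]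

theorem L2N_comp_add_right {G : Type*} [NormedAddCommGroup G] (f : (Fin n → ℝ) → G)
    (a : Fin n → ℝ) :
    L2N (fun w => f (w + a)) = L2N f := by
  calc L2N (fun w => f (w + a)) = eLpNorm f 2 (volume.map (· + a)) :=
        ((measurableEmbedding_addRight a).eLpNorm_map_measure).symm
    _ = L2N f := by rw [map_add_right_eq_self]; rfl

theorem HsN_comp_add_right (s : ℕ) (f : (Fin n → ℝ) → F) (a : Fin n → ℝ) :
    HsN s (fun w => f (w + a)) = HsN s f := by
  simp only [HsN, mderiv_comp_add_right, L2N_comp_add_right (mderiv _ f)]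

theorem EsN_comp_add_right {d : ℕ} (s : ℕ) (U : ℝ → (Fin (d + 1) → ℝ) → F) (a : Fin (d + 1) → ℝ) :
    EsN s (fun xd w => U xd (w + a)) = EsN s U := by
  simp only [EsN, HsN_comp_add_right]

end Translation

section SchwartzMDeriv

variable {n : ℕ}

def schwartzMDeriv (α : Fin n → ℕ) (σ : 𝓢(Fin n → ℝ, F)) : 𝓢(Fin n → ℝ, F) :=
  (multiIndexList α).foldr (fun i g => ∂_{(Pi.single i 1 : Fin n → ℝ)} g) σ

theorem coe_foldr_lineDerivOp_single (L : List (Fin n)) (σ : 𝓢(Fin n → ℝ, F)) :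
    ⇑(L.foldr (fun i g => ∂_{(Pi.single i 1 : Fin n → ℝ)} g) σ) = L.foldr pd ⇑σ := by
  induction L with
  | nil => rfl
  | cons i L ih =>
    ext x
    rw [List.foldr_cons, lineDerivOp_apply_eq_fderiv, ih, List.foldr_cons, pd]

theorem coe_schwartzMDeriv (α : Fin n → ℕ) (σ : 𝓢(Fin n → ℝ, F)) :
    ⇑(schwartzMDeriv α σ) = mderiv α σ := by
  rw [schwartzMDeriv, coe_foldr_lineDerivOp_single, mderiv_eq_foldr_pd]

theorem cons_multiIndexList_perm (α : Fin n → ℕ) (i : Fin n) :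
    (i :: multiIndexList α).Perm (multiIndexList (α + Pi.single i 1)) := by
  rw [List.perm_iff_count]
  intro j
  rw [List.count_cons, count_multiIndexList, count_multiIndexList, Pi.add_apply]
  by_cases hij : i = j
  · subst hij; simp
  · simp [hij]

theorem lineDerivOp_schwartzMDeriv (α : Fin n → ℕ) (i : Fin n) (σ : 𝓢(Fin n → ℝ, F)) :
    ∂_{(Pi.single i 1 : Fin n → ℝ)} (schwartzMDeriv α σ)
      = schwartzMDeriv (α + Pi.single i 1) σ :=
  foldr_lineDerivOp_perm (fun i => Pi.single i 1) (cons_multiIndexList_perm α i) σ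

theorem map_succAbove_multiIndexList_perm (p : Fin (n + 1)) (α : Fin n → ℕ) :
    ((multiIndexList α).map p.succAbove).Perm (multiIndexList (p.insertNth 0 α)) := by
  rw [List.perm_iff_count, p.forall_iff_succAbove]
  refine ⟨?_, fun j => ?_⟩
  · rw [count_multiIndexList, Fin.insertNth_apply_same, List.count_eq_zero]
    simp [Fin.succAbove_ne]
  · rw [List.count_map_of_injective _ _ Fin.succAbove_right_injective, count_multiIndexList,
      count_multiIndexList, Fin.insertNth_apply_succAbove]

end SchwartzMDeriv

section Slice

variable {n : ℕ}

def insertNthZeroCLM (p : Fin (n + 1)) : (Fin n → ℝ) →L[ℝ] (Fin (n + 1) → ℝ) :=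
  LinearMap.toContinuousLinearMap
    { toFun := fun w => p.insertNth 0 w
      map_add' := fun w v => by simpa using Fin.insertNth_add (α := fun _ => ℝ) p 0 0 w v
      map_smul' := fun c w => by
        ext i
        induction i using p.succAboveCases <;> simp }

theorem insertNth_eq_single_add (p : Fin (n + 1)) (t : ℝ) (w : Fin n → ℝ) :
    p.insertNth t w = Pi.single p t + insertNthZeroCLM p w := by
  simpa [insertNthZeroCLM, Fin.insertNth_zero_right] using
    Fin.insertNth_add (α := fun _ => ℝ) p t 0 0 w

theorem fun_insertNth_eq_single_add (p : Fin (n + 1)) (w : Fin n → ℝ) :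
    (fun t : ℝ => (p.insertNth t w : Fin (n + 1) → ℝ))
      = fun t => ContinuousLinearMap.single ℝ (fun _ => ℝ) p t + insertNthZeroCLM p w :=
  funext fun t => insertNth_eq_single_add p t w

theorem insertNthZeroCLM_single (p : Fin (n + 1)) (j : Fin n) :
    insertNthZeroCLM p (Pi.single j 1) = Pi.single (p.succAbove j) 1 := by
  ext i
  induction i using p.succAboveCases <;>
    simp [insertNthZeroCLM, Pi.single_apply, Fin.succAbove_right_injective.eq_iff]

theorem pd_comp_insertNth (p : Fin (n + 1)) (t : ℝ) (j : Fin n) (σ : 𝓢(Fin (n + 1) → ℝ, F)) :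
    pd j (fun w => σ (p.insertNth t w))
      = fun w => ∂_{(Pi.single (p.succAbove j) 1 : Fin (n + 1) → ℝ)} σ (p.insertNth t w) := by
  ext w
  have hcomp :
      (fun w => σ (p.insertNth t w)) = σ ∘ fun w => Pi.single p t + insertNthZeroCLM p w :=
    funext fun w => congrArg σ (insertNth_eq_single_add p t w)
  have hA : HasFDerivAt (fun w => Pi.single p t + insertNthZeroCLM p w) (insertNthZeroCLM p) w :=
    (insertNthZeroCLM p).hasFDerivAt.const_add _
  rw [pd, hcomp, ((σ.hasFDerivAt _).comp w hA).fderiv, ContinuousLinearMap.comp_apply,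
    insertNthZeroCLM_single, lineDerivOp_apply_eq_fderiv, insertNth_eq_single_add]

theorem foldr_pd_comp_insertNth (p : Fin (n + 1)) (t : ℝ) (L : List (Fin n))
    (σ : 𝓢(Fin (n + 1) → ℝ, F)) :
    L.foldr pd (fun w => σ (p.insertNth t w))
      = fun w => (L.map p.succAbove).foldr
          (fun i g => ∂_{(Pi.single i 1 : Fin (n + 1) → ℝ)} g) σ (p.insertNth t w) := by
  induction L with
  | nil => rfl
  | cons j L ih => rw [List.foldr_cons, ih, pd_comp_insertNth, List.map_cons, List.foldr_cons]

theorem mderiv_comp_insertNth (α : Fin n → ℕ) (p : Fin (n + 1)) (t : ℝ)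
    (σ : 𝓢(Fin (n + 1) → ℝ, F)) :
    mderiv α (fun w => σ (p.insertNth t w))
      = fun w => schwartzMDeriv (p.insertNth 0 α) σ (p.insertNth t w) := by
  rw [mderiv_eq_foldr_pd, foldr_pd_comp_insertNth, schwartzMDeriv,
    foldr_lineDerivOp_perm _ (map_succAbove_multiIndexList_perm p α)]

theorem HsN_comp_insertNth (s : ℕ) (p : Fin (n + 1)) (t : ℝ) (σ : 𝓢(Fin (n + 1) → ℝ, F)) :
    HsN s (fun w => σ (p.insertNth t w))
      = ∑ α ∈ mIdx n s,
          L2N (fun w => schwartzMDeriv (p.insertNth 0 fun i => (α i : ℕ)) σ (p.insertNth t w)) := by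
  simp only [HsN, mderiv_comp_insertNth]

end Slice

section SliceL2

variable {n : ℕ}

theorem eLpNorm_two_sq {α ε : Type*} [MeasurableSpace α] [ENorm ε] (f : α → ε) (μ : Measure α) :
    eLpNorm f 2 μ ^ 2 = ∫⁻ x, ‖f x‖ₑ ^ 2 ∂μ := by
  simpa using eLpNorm_nnreal_pow_eq_lintegral (f := f) (μ := μ) (p := 2) two_ne_zero

theorem measurable_insertNth_uncurry (p : Fin (n + 1)) :
    Measurable fun q : ℝ × (Fin n → ℝ) => p.insertNth (α := fun _ => ℝ) q.1 q.2 :=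
  (MeasurableEquiv.piFinSuccAbove (fun _ => ℝ) p).symm.measurable

theorem lintegral_insertNth (p : Fin (n + 1)) {G : (Fin (n + 1) → ℝ) → ℝ≥0∞}
    (hG : Measurable G) :
    ∫⁻ z, G z = ∫⁻ t, ∫⁻ w, G (p.insertNth t w) := by
  rw [← ((volume_preserving_piFinSuccAbove (fun _ => ℝ) p).symm _).lintegral_comp hG,
    Measure.volume_eq_prod]
  exact lintegral_prod _ (hG.comp (measurable_insertNth_uncurry p)).aemeasurable

theorem measurable_eLpNorm_slice {E : Type*} [NormedAddCommGroup E] (p : Fin (n + 1))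
    {g : (Fin (n + 1) → ℝ) → E} (hg : StronglyMeasurable g) :
    Measurable fun t => eLpNorm (fun w => g (p.insertNth t w)) 2 volume := by
  simp_rw [eLpNorm_eq_lintegral_rpow_enorm_toReal two_ne_zero ENNReal.ofNat_ne_top]
  exact ((hg.enorm.pow_const _).comp (measurable_insertNth_uncurry p)).lintegral_prod_right'
    |>.pow_const _

theorem eLpNorm_eLpNorm_slice {E : Type*} [NormedAddCommGroup E] (p : Fin (n + 1))
    {g : (Fin (n + 1) → ℝ) → E} (hg : StronglyMeasurable g) :
    eLpNorm (fun t => eLpNorm (fun w => g (p.insertNth t w)) 2 volume) 2 volume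
      = eLpNorm g 2 volume := by
  refine (ENNReal.pow_right_strictMono two_ne_zero).injective ?_
  simp only [eLpNorm_two_sq, enorm_eq_self]
  exact (lintegral_insertNth p (hg.enorm.pow_const 2)).symm

end SliceL2

section TraceOnLine

open Filter Set Topology

theorem Real.enorm_sq_eq_ofReal (r : ℝ) : ‖r‖ₑ ^ 2 = ENNReal.ofReal (r ^ 2) := by
  rw [Real.enorm_eq_ofReal_abs, ← ENNReal.ofReal_pow (abs_nonneg r), sq_abs]

theorem SchwartzMap.enorm_sq_le_lintegral {h h' : 𝓢(ℝ, ℝ)} (hderiv : ∀ t, HasDerivAt h (h' t) t)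
    (x : ℝ) : ‖h x‖ₑ ^ 2 ≤ ∫⁻ t, ‖h t‖ₑ ^ 2 + ‖h' t‖ₑ ^ 2 := by
  have hsq : Integrable fun t => h t ^ 2 + h' t ^ 2 :=
    (h.memLp 2).integrable_sq.add (h'.memLp 2).integrable_sq
  have hprod : Integrable fun t => 2 * h t * h' t := by
    simpa [mul_assoc] using ((h.memLp 2).integrable_mul (h'.memLp 2)).const_mul 2
  have hdecay : Tendsto (fun t => h t ^ 2) atTop (𝓝 0) := by
    simpa using ((h.tendsto_cocompact).mono_left atTop_le_cocompact).pow 2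
  have hftc : ∫ t in Ioi x, 2 * h t * h' t = 0 - h x ^ 2 :=
    integral_Ioi_of_hasDerivAt_of_tendsto'
      (fun t _ => by simpa [mul_comm, mul_left_comm] using (hderiv t).fun_pow 2)
      hprod.integrableOn hdecay
  have hreal : h x ^ 2 ≤ ∫ t, h t ^ 2 + h' t ^ 2 :=
    calc h x ^ 2 = ∫ t in Ioi x, -(2 * h t * h' t) := by rw [integral_neg, hftc]; ring
      _ ≤ ∫ t in Ioi x, h t ^ 2 + h' t ^ 2 :=
        setIntegral_mono hprod.neg.integrableOn hsq.integrableOn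
          fun t => by nlinarith [sq_nonneg (h t + h' t)]
      _ ≤ ∫ t, h t ^ 2 + h' t ^ 2 :=
        setIntegral_le_integral hsq (ae_of_all _ fun t => by positivity)
  calc ‖h x‖ₑ ^ 2 = ENNReal.ofReal (h x ^ 2) := Real.enorm_sq_eq_ofReal _
    _ ≤ ENNReal.ofReal (∫ t, h t ^ 2 + h' t ^ 2) := ENNReal.ofReal_le_ofReal hreal
    _ = ∫⁻ t, ENNReal.ofReal (h t ^ 2 + h' t ^ 2) :=
      ofReal_integral_eq_lintegral_ofReal hsq (ae_of_all _ fun t => by positivity)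
    _ = ∫⁻ t, ‖h t‖ₑ ^ 2 + ‖h' t‖ₑ ^ 2 := by
      simp only [ENNReal.ofReal_add (sq_nonneg _) (sq_nonneg _), Real.enorm_sq_eq_ofReal]

end TraceOnLine

section TraceOnHyperplane

variable {n : ℕ}

theorem hasTemperateGrowth_insertNth (p : Fin (n + 1)) (w : Fin n → ℝ) :
    (fun t : ℝ => (p.insertNth t w : Fin (n + 1) → ℝ)).HasTemperateGrowth := by
  rw [fun_insertNth_eq_single_add]
  exact (ContinuousLinearMap.hasTemperateGrowth _).add (.const _)

theorem antilipschitzWith_insertNth (p : Fin (n + 1)) (w : Fin n → ℝ) :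
    AntilipschitzWith 1 fun t : ℝ => (p.insertNth t w : Fin (n + 1) → ℝ) :=
  .of_le_mul_dist fun t t' => by
    simp

def lineRestrict (p : Fin (n + 1)) (w : Fin n → ℝ) : 𝓢(Fin (n + 1) → ℝ, F) →L[ℝ] 𝓢(ℝ, F) :=
  compCLMOfAntilipschitz ℝ (hasTemperateGrowth_insertNth p w) (antilipschitzWith_insertNth p w)

theorem lineRestrict_apply (p : Fin (n + 1)) (w : Fin n → ℝ) (g : 𝓢(Fin (n + 1) → ℝ, F)) (t : ℝ) :
    lineRestrict p w g t = g (p.insertNth t w) :=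
  congrFun (compCLMOfAntilipschitz_apply ℝ _ _ g) t

theorem hasDerivAt_lineRestrict (p : Fin (n + 1)) (w : Fin n → ℝ) (g : 𝓢(Fin (n + 1) → ℝ, F))
    (t : ℝ) :
    HasDerivAt (lineRestrict p w g)
      (lineRestrict p w (∂_{(Pi.single p 1 : Fin (n + 1) → ℝ)} g) t) t := by
  have hline :
      HasDerivAt (fun t : ℝ => (p.insertNth t w : Fin (n + 1) → ℝ)) (Pi.single p 1) t := by
    rw [fun_insertNth_eq_single_add]
    simpa using ((ContinuousLinearMap.single ℝ (fun _ => ℝ) p).hasFDerivAt.hasDerivAt).add_const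
      (insertNthZeroCLM p w) (x := t)
  rw [lineRestrict_apply, lineDerivOp_apply_eq_fderiv]
  exact (g.hasFDerivAt _).comp_hasDerivAt t hline

theorem lintegral_enorm_slice_sq_le (p : Fin (n + 1)) (g : 𝓢(Fin (n + 1) → ℝ, ℝ)) (t : ℝ) :
    ∫⁻ w, ‖g (p.insertNth t w)‖ₑ ^ 2
      ≤ (∫⁻ z, ‖g z‖ₑ ^ 2)
        + ∫⁻ z, ‖(∂_{(Pi.single p 1 : Fin (n + 1) → ℝ)} g : 𝓢(_, ℝ)) z‖ₑ ^ 2 := by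
  set g' : 𝓢(Fin (n + 1) → ℝ, ℝ) := ∂_{(Pi.single p 1 : Fin (n + 1) → ℝ)} g
  have hA : Measurable fun z => ‖g z‖ₑ ^ 2 := g.continuous.measurable.enorm.pow_const 2
  have hB : Measurable fun z => ‖g' z‖ₑ ^ 2 := g'.continuous.measurable.enorm.pow_const 2
  have hAB : Measurable fun z => ‖g z‖ₑ ^ 2 + ‖g' z‖ₑ ^ 2 := hA.add hB
  have hswap :=
    (hAB.comp (measurable_insertNth_uncurry p)).comp (measurable_swap (α := Fin n → ℝ) (β := ℝ))
  calc ∫⁻ w, ‖g (p.insertNth t w)‖ₑ ^ 2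
      ≤ ∫⁻ w, ∫⁻ s, ‖g (p.insertNth s w)‖ₑ ^ 2 + ‖g' (p.insertNth s w)‖ₑ ^ 2 :=
        lintegral_mono fun w => by
          simpa only [lineRestrict_apply] using
            enorm_sq_le_lintegral (hasDerivAt_lineRestrict p w g) t
    _ = ∫⁻ s, ∫⁻ w, ‖g (p.insertNth s w)‖ₑ ^ 2 + ‖g' (p.insertNth s w)‖ₑ ^ 2 :=
        lintegral_lintegral_swap hswap.aemeasurable
    _ = ∫⁻ z, ‖g z‖ₑ ^ 2 + ‖g' z‖ₑ ^ 2 := (lintegral_insertNth p hAB).symm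
    _ = (∫⁻ z, ‖g z‖ₑ ^ 2) + ∫⁻ z, ‖g' z‖ₑ ^ 2 := lintegral_add_left hA _

theorem eLpNorm_slice_le (p : Fin (n + 1)) (g : 𝓢(Fin (n + 1) → ℝ, ℝ)) (t : ℝ) :
    eLpNorm (fun w => g (p.insertNth t w)) 2 volume
      ≤ eLpNorm g 2 volume
        + eLpNorm (∂_{(Pi.single p 1 : Fin (n + 1) → ℝ)} g : 𝓢(_, ℝ)) 2 volume := by
  rw [← ENNReal.pow_le_pow_left_iff two_ne_zero, eLpNorm_two_sq, add_sq, eLpNorm_two_sq,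
    eLpNorm_two_sq]
  exact (lintegral_enorm_slice_sq_le p g t).trans (by gcongr; exact le_add_right le_rfl)

end TraceOnHyperplane

section SliceBounds

variable {n : ℕ}

theorem sum_insertNth (p : Fin (n + 1)) (c : ℕ) (α : Fin n → ℕ) :
    ∑ i, (p.insertNth c α : Fin (n + 1) → ℕ) i = c + ∑ i, α i := by
  simp [Fin.sum_univ_succAbove _ p]

theorem insertNth_zero_add_single (p : Fin (n + 1)) (α : Fin n → ℕ) :
    (p.insertNth 0 α : Fin (n + 1) → ℕ) + Pi.single p 1 = p.insertNth 1 α := by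
  rw [← Fin.insertNth_zero_right, ← Fin.insertNth_add]
  simp

theorem L2N_slice_schwartzMDeriv_le (p : Fin (n + 1)) (σ : 𝓢(Fin (n + 1) → ℝ, ℝ)) {s : ℕ}
    (α : Fin n → ℕ) (hα : ∑ i, α i ≤ s) (t : ℝ) :
    L2N (fun w => schwartzMDeriv (p.insertNth 0 α) σ (p.insertNth t w)) ≤ 2 * HsN (s + 1) σ := by
  have htrace := eLpNorm_slice_le p (schwartzMDeriv (p.insertNth 0 α) σ) t
  rw [lineDerivOp_schwartzMDeriv, insertNth_zero_add_single] at htrace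
  refine htrace.trans ?_
  rw [coe_schwartzMDeriv, coe_schwartzMDeriv, two_mul]
  gcongr <;> refine L2N_mderiv_le_HsN _ _ ?_ <;> rw [sum_insertNth] <;> omega

theorem HsN_slice_le (p : Fin (n + 1)) (σ : 𝓢(Fin (n + 1) → ℝ, ℝ)) (s : ℕ) (t : ℝ) :
    HsN s (fun w => σ (p.insertNth t w)) ≤ 2 * (mIdx n s).card * HsN (s + 1) σ := by
  rw [HsN_comp_insertNth]
  calc _ ≤ ∑ _α ∈ mIdx n s, 2 * HsN (s + 1) σ :=
        Finset.sum_le_sum fun α hα =>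
          L2N_slice_schwartzMDeriv_le p σ _ (Finset.mem_filter.1 hα).2 t
    _ = _ := by rw [Finset.sum_const, nsmul_eq_mul]; ring

theorem eLpNorm_HsN_slice_le (p : Fin (n + 1)) (σ : 𝓢(Fin (n + 1) → ℝ, F)) (s : ℕ) :
    eLpNorm (fun t => HsN s fun w => σ (p.insertNth t w)) 2 volume
      ≤ (mIdx n s).card * HsN s σ := by
  simp only [HsN_comp_insertNth, L2N]
  rw [← Finset.sum_fn]
  refine (eLpNorm_sum_le (fun α _ => (measurable_eLpNorm_slice p
    (schwartzMDeriv _ σ).continuous.stronglyMeasurable).aestronglyMeasurable) one_le_two).trans ?_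
  calc _ ≤ ∑ _α ∈ mIdx n s, HsN s σ := Finset.sum_le_sum fun α hα => by
        rw [eLpNorm_eLpNorm_slice p (schwartzMDeriv _ σ).continuous.stronglyMeasurable,
          coe_schwartzMDeriv]
        refine L2N_mderiv_le_HsN _ _ ?_
        rw [sum_insertNth, zero_add]
        exact (Finset.mem_filter.1 hα).2
    _ = _ := by rw [Finset.sum_const, nsmul_eq_mul]

end SliceBounds

section EsNorm

variable {d : ℕ}

theorem rpow_setLIntegral_sq_le_eLpNorm {X : Type*} [MeasurableSpace X] (μ : Measure X)
    (S : Set X) (f : X → ℝ≥0∞) :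
    (∫⁻ x in S, f x ^ 2 ∂μ) ^ (1 / 2 : ℝ) ≤ eLpNorm f 2 μ :=
  calc (∫⁻ x in S, f x ^ 2 ∂μ) ^ (1 / 2 : ℝ) = eLpNorm f 2 (μ.restrict S) := by
        simp [eLpNorm_eq_lintegral_rpow_enorm_toReal]
    _ ≤ eLpNorm f 2 μ := eLpNorm_mono_measure f Measure.restrict_le_self

theorem EsN_slice_le (p : Fin (d + 2)) (σ : 𝓢(Fin (d + 2) → ℝ, ℝ)) (s : ℕ) :
    EsN s (fun xd w => σ (p.insertNth xd w))
      ≤ (2 * (mIdx (d + 1) s).card + (mIdx (d + 1) (s + 1)).card) * HsN (s + 1) σ := by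
  rw [EsN, add_mul]
  gcongr
  · exact iSup₂_le fun xd _ => HsN_slice_le p σ s xd
  · exact (rpow_setLIntegral_sq_le_eLpNorm _ _ _).trans (eLpNorm_HsN_slice_le p σ (s + 1))

theorem pt_add_eq_insertNth (w : Fin (d + 1) → ℝ) (xd c : ℝ) :
    pt w xd (w (Fin.last d) + c)
      = (Fin.last d).castSucc.insertNth xd (w + Pi.single (Fin.last d) c) := by
  ext i
  induction i using Fin.lastCases with
  | last =>
    rw [← Fin.succ_last, ← Fin.succAbove_castSucc_self, Fin.insertNth_apply_succAbove]
    simp [pt]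
  | cast i =>
    induction i using Fin.lastCases with
    | last => simp [pt]
    | cast k =>
      rw [← Fin.succAbove_of_castSucc_lt _ _
          (Fin.castSucc_lt_castSucc_iff.2 (Fin.castSucc_lt_last k)),
        Fin.insertNth_apply_succAbove]
      simp [pt, (Fin.castSucc_lt_last k).ne]

end EsNorm

theorem profile_substitution_Es_bound_general (d : ℕ) (s : ℕ) :
    ∃ C : ℝ, 0 < C ∧ ∀ (ω : ℝ) (σ : SchwartzMap ((Fin (d + 2)) → ℝ) ℝ),
      CalEsN s (fun ξd xd (w : Fin (d + 1) → ℝ) =>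
          σ (pt w xd (w (Fin.last d) + ω * ξd)))
        ≤ ENNReal.ofReal C * HsN (s + 1) (⇑σ) := by
  set C : ℕ := 2 * (mIdx (d + 1) s).card + (mIdx (d + 1) (s + 1)).card
  refine ⟨C + 1, by positivity, fun ω σ => iSup₂_le fun ξd _ => ?_⟩
  simp only [pt_add_eq_insertNth]
  rw [EsN_comp_add_right s (fun xd w => σ ((Fin.last d).castSucc.insertNth xd w))]
  refine (EsN_slice_le _ σ s).trans ?_
  gcongr
  rw [← Nat.cast_add_one, ENNReal.ofReal_natCast]
  exact_mod_cast Nat.le_succ C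

/-- substituting `θ₀ + ω ξ_d` into a Schwartz profile is bounded
from `H^{s+1}` into `𝓔^s`, uniformly in `ω`. -/
theorem profile_substitution_Es_bound (d : ℕ) (hd : 1 ≤ d) (s : ℕ) :
    ∃ C : ℝ, 0 < C ∧ ∀ (ω : ℝ) (σ : SchwartzMap ((Fin (d + 2)) → ℝ) ℝ),
      CalEsN s (fun ξd xd (w : Fin (d + 1) → ℝ) =>
          σ (pt w xd (w (Fin.last d) + ω * ξd)))
        ≤ ENNReal.ofReal C * HsN (s + 1) (⇑σ) :=
  profile_substitution_Es_bound_general d s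
end
end

section
/- (Symmetry of the self-interaction coefficients.) Let N ≥ 1 and q ≥ 1, let U ⊆ ℝ^q be an open neighborhood of 0, and let A : U → M_N(ℝ), ω : U → ℝ and P : U → M_N(ℝ) be differentiable at 0. Assume (ω(u)I + A(u)) P(u) = 0 for all u ∈ U, that P(0) is idempotent (P(0)² = P(0)), and that P(0)(ω(0)I + A(0)) = 0. Then for every w ∈ ℝ^q, P(0) (dA(0)·w) P(0) = −(dω(0)·w) P(0), where dA(0)·w ∈ M_N(ℝ) and dω(0)·w ∈ ℝ denote the directional derivatives of A and ω at 0 in the direction w. -/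
/-!
Differentiating `(ω • 1 + A) * P = 0` in the direction `w` gives
`(dω w • 1 + dA w) * P + (ω • 1 + A) * dP w = 0`. Multiplying on the left by `P 0` kills the
second term because `P 0 * (ω 0 • 1 + A 0) = 0`, and idempotence of `P 0` turns the first into
`dω w • P 0 + P 0 * dA w * P 0`. The argument works in any normed algebra; matrices are given the
`L∞` operator norm, for which the entrywise derivatives of the statement are Fréchet derivatives.
-/

open Filter Topology

section NormedAlgebra

variable {𝕜 E 𝔸 : Type*} [NontriviallyNormedField 𝕜] [NormedAddCommGroup E] [NormedSpace 𝕜 E]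
  [NormedRing 𝔸] [NormedAlgebra 𝕜 𝔸]

theorem fderiv_mul_add_mul_fderiv_eq_zero {L P : E → 𝔸} {x : E}
    (hL : DifferentiableAt 𝕜 L x) (hP : DifferentiableAt 𝕜 P x) (h : L * P =ᶠ[𝓝 x] 0) (w : E) :
    fderiv 𝕜 L x w * P x + L x * fderiv 𝕜 P x w = 0 := by
  have := (hL.hasFDerivAt.mul' hP.hasFDerivAt).unique
    ((hasFDerivAt_const 0 x).congr_of_eventuallyEq h)
  simpa [add_comm] using congr($this w)

theorem mul_fderiv_mul_eq_zero {L P : E → 𝔸} {x : E}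
    (hL : DifferentiableAt 𝕜 L x) (hP : DifferentiableAt 𝕜 P x) (h : L * P =ᶠ[𝓝 x] 0)
    (hleft : P x * L x = 0) (w : E) :
    P x * fderiv 𝕜 L x w * P x = 0 := by
  have := congr(P x * $(fderiv_mul_add_mul_fderiv_eq_zero hL hP h w))
  rwa [mul_add, ← mul_assoc, ← mul_assoc, hleft, zero_mul, add_zero, mul_zero] at this

theorem mul_fderiv_mul_eq_neg_smul_of_eigenprojection {A P : E → 𝔸} {ω : E → 𝕜} {x : E}
    (hA : DifferentiableAt 𝕜 A x) (hω : DifferentiableAt 𝕜 ω x) (hP : DifferentiableAt 𝕜 P x)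
    (heig : ∀ᶠ u in 𝓝 x, (ω u • 1 + A u) * P u = 0) (hidem : IsIdempotentElem (P x))
    (hleft : P x * (ω x • 1 + A x) = 0) (w : E) :
    P x * fderiv 𝕜 A x w * P x = -(fderiv 𝕜 ω x w) • P x := by
  have hL := (hω.hasFDerivAt.smul_const (1 : 𝔸)).add hA.hasFDerivAt
  have := mul_fderiv_mul_eq_zero hL.differentiableAt hP heig hleft w
  rw [hL.fderiv] at this
  simp only [add_apply, ContinuousLinearMap.smulRight_apply, mul_add,
    add_mul, mul_smul_one, smul_mul_assoc, hidem.eq] at this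
  rw [neg_smul, eq_neg_iff_add_eq_zero, add_comm, this]

end NormedAlgebra

namespace Matrix

open scoped Matrix.Norms.Operator

variable {𝕜 E m n : Type*} [NontriviallyNormedField 𝕜] [NormedAddCommGroup E] [NormedSpace 𝕜 E]
  [Fintype m] [Fintype n] [DecidableEq m] [DecidableEq n]

theorem hasFDerivAt_of_differentiableAt_entries {M : E → Matrix m n 𝕜} {x : E}
    (h : ∀ i j, DifferentiableAt 𝕜 (fun u => M u i j) x) :
    HasFDerivAt M (∑ i, ∑ j, (fderiv 𝕜 (fun u => M u i j) x).smulRight (single i j (1 : 𝕜))) x := by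
  have hsum := HasFDerivAt.fun_sum (u := Finset.univ) fun i _ =>
    HasFDerivAt.fun_sum (u := Finset.univ) fun j _ =>
      (h i j).hasFDerivAt.smul_const (single i j (1 : 𝕜))
  refine hsum.congr_of_eventuallyEq (.of_forall fun u => ?_)
  simpa only [smul_single, smul_eq_mul, mul_one] using matrix_eq_sum_single (M u)

theorem fderiv_apply_eq_of_differentiableAt_entries {M : E → Matrix m n 𝕜} {x : E}
    (h : ∀ i j, DifferentiableAt 𝕜 (fun u => M u i j) x) (w : E) :
    fderiv 𝕜 M x w = of fun i j => fderiv 𝕜 (fun u => M u i j) x w := by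
  rw [(hasFDerivAt_of_differentiableAt_entries h).fderiv]
  conv_rhs => rw [matrix_eq_sum_single (of _)]
  simp

end Matrix

theorem self_interaction_symmetry_general (N q : ℕ)
    (U : Set (Fin q → ℝ)) (hUopen : IsOpen U) (hU0 : (0 : Fin q → ℝ) ∈ U)
    (A : (Fin q → ℝ) → Matrix (Fin N) (Fin N) ℝ)
    (ω : (Fin q → ℝ) → ℝ)
    (P : (Fin q → ℝ) → Matrix (Fin N) (Fin N) ℝ)
    (hAdiff : ∀ i j, DifferentiableAt ℝ (fun u => A u i j) 0)
    (hωdiff : DifferentiableAt ℝ ω 0)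
    (hPdiff : ∀ i j, DifferentiableAt ℝ (fun u => P u i j) 0)
    (heig : ∀ u ∈ U, (ω u • (1 : Matrix (Fin N) (Fin N) ℝ) + A u) * P u = 0)
    (hidem : P 0 * P 0 = P 0)
    (hleft : P 0 * (ω 0 • (1 : Matrix (Fin N) (Fin N) ℝ) + A 0) = 0) :
    ∀ w : Fin q → ℝ,
      P 0 * Matrix.of (fun i j => fderiv ℝ (fun u => A u i j) 0 w) * P 0 =
        (-(fderiv ℝ ω 0 w)) • P 0 := by
  intro w
  open scoped Matrix.Norms.Operator in
  · rw [← Matrix.fderiv_apply_eq_of_differentiableAt_entries hAdiff w]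
    exact mul_fderiv_mul_eq_neg_smul_of_eigenprojection
      (Matrix.hasFDerivAt_of_differentiableAt_entries hAdiff).differentiableAt hωdiff
      (Matrix.hasFDerivAt_of_differentiableAt_entries hPdiff).differentiableAt
      (eventually_of_mem (hUopen.mem_nhds hU0) heig) hidem hleft w

/-- symmetry of the self-interaction coefficients, obtained by
differentiating the eigenprojection relation. -/
theorem self_interaction_symmetry (N q : ℕ) (hN : 1 ≤ N) (hq : 1 ≤ q)
    (U : Set (Fin q → ℝ)) (hUopen : IsOpen U) (hU0 : (0 : Fin q → ℝ) ∈ U)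
    (A : (Fin q → ℝ) → Matrix (Fin N) (Fin N) ℝ)
    (ω : (Fin q → ℝ) → ℝ)
    (P : (Fin q → ℝ) → Matrix (Fin N) (Fin N) ℝ)
    (hAdiff : ∀ i j, DifferentiableAt ℝ (fun u => A u i j) 0)
    (hωdiff : DifferentiableAt ℝ ω 0)
    (hPdiff : ∀ i j, DifferentiableAt ℝ (fun u => P u i j) 0)
    (heig : ∀ u ∈ U, (ω u • (1 : Matrix (Fin N) (Fin N) ℝ) + A u) * P u = 0)
    (hidem : P 0 * P 0 = P 0)
    (hleft : P 0 * (ω 0 • (1 : Matrix (Fin N) (Fin N) ℝ) + A 0) = 0) :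
    ∀ w : Fin q → ℝ,
      P 0 * Matrix.of (fun i j => fderiv ℝ (fun u => A u i j) 0 w) * P 0 =
        (-(fderiv ℝ ω 0 w)) • P 0 :=
  self_interaction_symmetry_general N q U hUopen hU0 A ω P hAdiff hωdiff hPdiff heig hidem hleft
end
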